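/- In a game with no cycle of total weight zero, every vertex has nonzero MP-value; moreover every vertex v with MP-value < 0 has finite supΣ-value (a nonnegative integer) and infΣ-value equal to −∞, and every vertex v with MP-value > 0 has supΣ-value equal to +∞ and finite infΣ-value (a nonpositive integer). -/
import Mathlib


/-!
Basic definitions for mean-payoff games: games, infinite paths, positional
strategies, the valuations MP, supΣ^X and infΣ^X, values of vertices,
zones N, P, ZN, ZP (also relative to a sub-arena), reduced games,
potentials and potential reductions, traps.
-/

/-- A game: a sinkless directed graph with integer weights, whose vertices are
partitioned into Min-vertices (`IsMin`) and Max-vertices (`¬ IsMin`). -/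
structure MPGame (V : Type*) where
  E : V → V → Prop
  w : V → V → ℤ
  IsMin : V → Prop
  sinkless : ∀ v, ∃ v', E v v'

namespace MPGame

variable {V : Type*}

/-- An infinite path in a game. -/
structure Path (G : MPGame V) where
  vert : ℕ → V
  adj : ∀ i, G.E (vert i) (vert (i + 1))

/-- The sum of the weights of the first `k` edges of a path. -/
def Path.wsum {G : MPGame V} (π : G.Path) (k : ℕ) : ℤ :=
  ∑ i ∈ Finset.range k, G.w (π.vert i) (π.vert (i + 1))

/-- The tail of a path (drop the first vertex). -/
def Path.tail {G : MPGame V} (π : G.Path) : G.Path :=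
  ⟨fun i => π.vert (i + 1), fun i => π.adj (i + 1)⟩

/-- A positional strategy `σ : V → V` is legal if it always follows an edge. -/
def Legal (G : MPGame V) (σ : V → V) : Prop := ∀ v, G.E v (σ v)

/-- Consistency of a path with a positional Min-strategy. -/
def Path.ConsMin {G : MPGame V} (π : G.Path) (σ : V → V) : Prop :=
  ∀ i, G.IsMin (π.vert i) → π.vert (i + 1) = σ (π.vert i)

/-- Consistency of a path with a positional Max-strategy. -/
def Path.ConsMax {G : MPGame V} (π : G.Path) (τ : V → V) : Prop :=
  ∀ i, ¬ G.IsMin (π.vert i) → π.vert (i + 1) = τ (π.vert i)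

/-- The mean-payoff valuation `MP(π) = limsup_k (1/k) ∑_{i<k} w_i`. -/
noncomputable def MP {G : MPGame V} (π : G.Path) : EReal :=
  Filter.limsup (fun k => (((π.wsum k : ℝ) / (k : ℝ)) : EReal)) Filter.atTop

/-- `supΣ^X(π) = sup_{k ≤ n_X} ∑_{i<k} w_i`, where `n_X` is the first hitting
time of `X` (all `k` if `X` is never hit). -/
noncomputable def supSigma {G : MPGame V} (X : Set V) (π : G.Path) : EReal :=
  ⨆ k : {k : ℕ // ∀ i < k, π.vert i ∉ X}, ((π.wsum k.1 : ℝ) : EReal)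

/-- `infΣ^X(π) = inf_{k ≤ n_X} ∑_{i<k} w_i`. -/
noncomputable def infSigma {G : MPGame V} (X : Set V) (π : G.Path) : EReal :=
  ⨅ k : {k : ℕ // ∀ i < k, π.vert i ∉ X}, ((π.wsum k.1 : ℝ) : EReal)

/-- `inf_σ sup_{π ⊨ σ, π from v} val(π)`, over legal positional Min-strategies. -/
noncomputable def minVal (G : MPGame V) (val : G.Path → EReal) (v : V) : EReal :=
  ⨅ σ : {σ : V → V // G.Legal σ},
    ⨆ π : {π : G.Path // π.vert 0 = v ∧ π.ConsMin σ.1}, val π.1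

/-- `sup_τ inf_{π ⊨ τ, π from v} val(π)`, over legal positional Max-strategies. -/
noncomputable def maxVal (G : MPGame V) (val : G.Path → EReal) (v : V) : EReal :=
  ⨆ τ : {τ : V → V // G.Legal τ},
    ⨅ π : {π : G.Path // π.vert 0 = v ∧ π.ConsMax τ.1}, val π.1

/-- The MP-value of a vertex. -/
noncomputable def MPval (G : MPGame V) (v : V) : EReal := G.minVal MP v

/-- The `supΣ^X`-value of a vertex. -/
noncomputable def supSigmaVal (G : MPGame V) (X : Set V) (v : V) : EReal :=
  G.minVal (supSigma X) v

/-- The `infΣ^X`-value of a vertex. -/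
noncomputable def infSigmaVal (G : MPGame V) (X : Set V) (v : V) : EReal :=
  G.minVal (infSigma X) v

/-- `G` has no cycle of total weight zero: no path repeats a vertex with the
same partial sum of weights. -/
def NoZeroCycle (G : MPGame V) : Prop :=
  ∀ (π : G.Path) (i j : ℕ), i < j → π.vert i = π.vert j → π.wsum i ≠ π.wsum j

/-- The zone `N` of the subgame of `G` induced on `D`: vertices whose
immediately optimal edges (within `D`) have weight `< 0`. -/
def NsetOn (G : MPGame V) (D : Set V) : Set V :=
  {v | v ∈ D ∧ ((G.IsMin v ∧ ∃ v' ∈ D, G.E v v' ∧ G.w v v' < 0) ∨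
      (¬ G.IsMin v ∧ ∀ v' ∈ D, G.E v v' → G.w v v' < 0))}

/-- The zone `P` of the subgame of `G` induced on `D`. -/
def PsetOn (G : MPGame V) (D : Set V) : Set V :=
  {v | v ∈ D ∧ ((¬ G.IsMin v ∧ ∃ v' ∈ D, G.E v v' ∧ 0 < G.w v v') ∨
      (G.IsMin v ∧ ∀ v' ∈ D, G.E v v' → 0 < G.w v v'))}

/-- The zone `N` of `G`. -/
def Nset (G : MPGame V) : Set V := G.NsetOn Set.univ

/-- The zone `P` of `G`. -/
def Pset (G : MPGame V) : Set V := G.PsetOn Set.univ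

/-- The zone `ZN` of the subgame of `G` induced on `D`: vertices from which
Min can force that an edge of weight `< 0` is visited before any edge of
weight `> 0` (staying within `D`). -/
inductive ZNr (G : MPGame V) (D : Set V) : V → Prop
  | minNeg (v v' : V) : v ∈ D → G.IsMin v → v' ∈ D → G.E v v' → G.w v v' < 0 →
      ZNr G D v
  | minZero (v v' : V) : v ∈ D → G.IsMin v → v' ∈ D → G.E v v' → G.w v v' = 0 →
      ZNr G D v' → ZNr G D v
  | max (v : V) : v ∈ D → ¬ G.IsMin v →
      (∀ v' ∈ D, G.E v v' → G.w v v' ≤ 0) →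
      (∀ v', v' ∈ D → G.E v v' → G.w v v' = 0 → ZNr G D v') →
      ZNr G D v

/-- The zone `ZP` of the subgame of `G` induced on `D`. -/
inductive ZPr (G : MPGame V) (D : Set V) : V → Prop
  | maxPos (v v' : V) : v ∈ D → ¬ G.IsMin v → v' ∈ D → G.E v v' → 0 < G.w v v' →
      ZPr G D v
  | maxZero (v v' : V) : v ∈ D → ¬ G.IsMin v → v' ∈ D → G.E v v' → G.w v v' = 0 →
      ZPr G D v' → ZPr G D v
  | min (v : V) : v ∈ D → G.IsMin v →
      (∀ v' ∈ D, G.E v v' → 0 ≤ G.w v v') →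
      (∀ v', v' ∈ D → G.E v v' → G.w v v' = 0 → ZPr G D v') →
      ZPr G D v

/-- The zone `ZN` of `G`. -/
def ZN (G : MPGame V) : V → Prop := G.ZNr Set.univ

/-- The zone `ZP` of `G`. -/
def ZP (G : MPGame V) : V → Prop := G.ZPr Set.univ

/-- The subgame of `G` induced on `D` is reduced: from every vertex of `ZN`,
Min can force that the first edge visited has weight `≤ 0` and leads into
`ZN`, and symmetrically for `ZP` and Max. -/
def ReducedOn (G : MPGame V) (D : Set V) : Prop :=
  (∀ v, G.ZNr D v →
     (G.IsMin v → ∃ v' ∈ D, G.E v v' ∧ G.w v v' ≤ 0 ∧ G.ZNr D v') ∧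
     (¬ G.IsMin v → ∀ v' ∈ D, G.E v v' → G.w v v' ≤ 0 ∧ G.ZNr D v')) ∧
  (∀ v, G.ZPr D v →
     (¬ G.IsMin v → ∃ v' ∈ D, G.E v v' ∧ 0 ≤ G.w v v' ∧ G.ZPr D v') ∧
     (G.IsMin v → ∀ v' ∈ D, G.E v v' → 0 ≤ G.w v v' ∧ G.ZPr D v'))

/-- `G` is reduced. -/
def Reduced (G : MPGame V) : Prop := G.ReducedOn Set.univ

/-- The subgame of `G` induced on `D` is positively reduced: `ZN = ∅`. -/
def PosReducedOn (G : MPGame V) (D : Set V) : Prop := ∀ v, ¬ G.ZNr D v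

/-- `A` is a trap for Min: a sinkless subgraph from which Min cannot escape. -/
def TrapForMin (G : MPGame V) (A : Set V) : Prop :=
  (∀ v ∈ A, ∃ v' ∈ A, G.E v v') ∧
  ∀ v ∈ A, G.IsMin v → ∀ v', G.E v v' → v' ∈ A

/-- `A` is a trap for Max: a sinkless subgraph from which Max cannot escape. -/
def TrapForMax (G : MPGame V) (A : Set V) : Prop :=
  (∀ v ∈ A, ∃ v' ∈ A, G.E v v') ∧
  ∀ v ∈ A, ¬ G.IsMin v → ∀ v', G.E v v' → v' ∈ A

/-- The potential reduction of `G` by the potential `φ`. -/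
def pot (G : MPGame V) (φ : V → ℤ) : MPGame V where
  E := G.E
  w := fun v v' => G.w v v' + φ v' - φ v
  IsMin := G.IsMin
  sinkless := G.sinkless

/-! ### Auxiliary lemmas -/

theorem Path.wsum_zero' {G : MPGame V} (π : G.Path) : π.wsum 0 = 0 := by
  simp [Path.wsum]

theorem Path.wsum_succ' {G : MPGame V} (π : G.Path) (k : ℕ) :
    π.wsum (k + 1) = π.wsum k + G.w (π.vert k) (π.vert (k + 1)) :=
  Finset.sum_range_succ _ k

theorem Path.wsum_congr {G : MPGame V} {π π' : G.Path} {k : ℕ}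
    (h : ∀ m, m ≤ k → π.vert m = π'.vert m) : π.wsum k = π'.wsum k := by
  unfold Path.wsum
  refine Finset.sum_congr rfl fun t ht => ?_
  rw [Finset.mem_range] at ht
  rw [h t (by omega), h (t + 1) (by omega)]

theorem Path.wsum_le_bound {G : MPGame V} (π : G.Path) {W : ℤ}
    (hW : ∀ u u', G.E u u' → G.w u u' ≤ W) : ∀ k : ℕ, π.wsum k ≤ (k : ℤ) * W := by
  intro k
  induction k with
  | zero => simp [Path.wsum_zero']
  | succ k ih =>
    rw [Path.wsum_succ']
    have := hW _ _ (π.adj k)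
    push_cast
    linarith

theorem Path.le_wsum_bound {G : MPGame V} (π : G.Path) {W : ℤ}
    (hW : ∀ u u', G.E u u' → -W ≤ G.w u u') : ∀ k : ℕ, -((k : ℤ) * W) ≤ π.wsum k := by
  intro k
  induction k with
  | zero => simp [Path.wsum_zero']
  | succ k ih =>
    rw [Path.wsum_succ']
    have := hW _ _ (π.adj k)
    push_cast
    linarith

/-! ### The skip construction: removing a cycle from a path -/

def Path.skip {G : MPGame V} (π : G.Path) (a b : ℕ) (hab : a ≤ b)
    (heq : π.vert a = π.vert b) : G.Path where
  vert m := if m < a then π.vert m else π.vert (m + (b - a))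
  adj m := by
    by_cases h1 : m + 1 < a
    · rw [if_pos (by omega), if_pos h1]; exact π.adj m
    · by_cases h2 : m < a
      · have hma : m + 1 = a := by omega
        rw [if_pos h2, if_neg h1]
        have hb : m + 1 + (b - a) = b := by omega
        rw [hb, ← heq, ← hma]
        exact π.adj m
      · rw [if_neg h2, if_neg h1]
        have hb : m + 1 + (b - a) = (m + (b - a)) + 1 := by omega
        rw [hb]
        exact π.adj _

theorem Path.skip_vert_le {G : MPGame V} (π : G.Path) {a b : ℕ} (hab : a ≤ b)
    (heq : π.vert a = π.vert b) {m : ℕ} (hm : m ≤ a) :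
    (π.skip a b hab heq).vert m = π.vert m := by
  show (if m < a then π.vert m else π.vert (m + (b - a))) = π.vert m
  by_cases h : m < a
  · rw [if_pos h]
  · have hma : m = a := by omega
    rw [if_neg h, hma, show a + (b - a) = b from by omega, ← heq]

theorem Path.skip_vert_ge {G : MPGame V} (π : G.Path) {a b : ℕ} (hab : a ≤ b)
    (heq : π.vert a = π.vert b) {m : ℕ} (hm : a ≤ m) :
    (π.skip a b hab heq).vert m = π.vert (m + (b - a)) := by
  show (if m < a then π.vert m else π.vert (m + (b - a))) = _
  by_cases h : m < a
  · omega
  · rw [if_neg h]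

theorem Path.skip_wsum_le {G : MPGame V} (π : G.Path) {a b : ℕ} (hab : a ≤ b)
    (heq : π.vert a = π.vert b) {k : ℕ} (hk : k ≤ a) :
    (π.skip a b hab heq).wsum k = π.wsum k :=
  Path.wsum_congr fun m hm => Path.skip_vert_le π hab heq (by omega)

theorem Path.skip_wsum_ge {G : MPGame V} (π : G.Path) {a b : ℕ} (hab : a ≤ b)
    (heq : π.vert a = π.vert b) : ∀ k, a ≤ k →
    (π.skip a b hab heq).wsum k = π.wsum (k + (b - a)) + π.wsum a - π.wsum b := by
  intro k hk
  induction k, hk using Nat.le_induction with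
  | base =>
    rw [Path.skip_wsum_le π hab heq (le_refl a), show a + (b - a) = b from by omega]
    ring
  | succ k hk ih =>
    rw [Path.wsum_succ', ih,
      Path.skip_vert_ge π hab heq (by omega : a ≤ k),
      Path.skip_vert_ge π hab heq (by omega : a ≤ k + 1),
      show k + 1 + (b - a) = (k + (b - a)) + 1 from by omega, Path.wsum_succ']
    ring

theorem Path.skip_consMin {G : MPGame V} (π : G.Path) {a b : ℕ} (hab : a ≤ b)
    (heq : π.vert a = π.vert b) {σ : V → V} (hc : π.ConsMin σ) :
    (π.skip a b hab heq).ConsMin σ := by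
  intro m hm
  by_cases h2 : m < a
  · rw [Path.skip_vert_le π hab heq (le_of_lt h2)] at hm ⊢
    rw [Path.skip_vert_le π hab heq (by omega : m + 1 ≤ a)]
    exact hc m hm
  · rw [Path.skip_vert_ge π hab heq (not_lt.1 h2)] at hm ⊢
    rw [Path.skip_vert_ge π hab heq (by omega : a ≤ m + 1),
      show m + 1 + (b - a) = (m + (b - a)) + 1 from by omega]
    exact hc _ hm

/-! ### The loop construction: looping forever around a cycle -/

theorem Path.loop_target {G : MPGame V} (π : G.Path) {i d : ℕ} (hd : 0 < d)
    (heq : π.vert (i + d) = π.vert i) {r : ℕ} (hr : r < d) :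
    π.vert (i + (r + 1) % d) = π.vert (i + r + 1) := by
  by_cases h : r + 1 < d
  · rw [Nat.mod_eq_of_lt h, ← Nat.add_assoc]
  · have hrd : r + 1 = d := by omega
    rw [hrd, Nat.mod_self, Nat.add_zero, ← heq]
    congr 1
    omega

def Path.loopAt {G : MPGame V} (π : G.Path) (i d : ℕ) (hd : 0 < d)
    (heq : π.vert (i + d) = π.vert i) : G.Path where
  vert m := if m < i then π.vert m else π.vert (i + (m - i) % d)
  adj m := by
    by_cases h1 : m + 1 < i
    · rw [if_pos (by omega), if_pos h1]; exact π.adj m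
    · by_cases h2 : m < i
      · have hmi : m + 1 = i := by omega
        rw [if_pos h2, if_neg h1, hmi, Nat.sub_self, Nat.zero_mod, Nat.add_zero, ← hmi]
        exact π.adj m
      · rw [if_neg h2, if_neg h1]
        have hsub : m + 1 - i = (m - i) + 1 := by omega
        rw [hsub]
        have hr : (m - i) % d < d := Nat.mod_lt _ hd
        have hmod : ((m - i) + 1) % d = ((m - i) % d + 1) % d := by
          conv_lhs => rw [Nat.add_mod]
          conv_rhs => rw [Nat.add_mod, Nat.mod_mod_of_dvd _ dvd_rfl]
        rw [hmod, Path.loop_target π hd heq hr]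
        exact π.adj _

theorem Path.loop_vert_le {G : MPGame V} (π : G.Path) {i d : ℕ} (hd : 0 < d)
    (heq : π.vert (i + d) = π.vert i) {m : ℕ} (hm : m ≤ i) :
    (π.loopAt i d hd heq).vert m = π.vert m := by
  show (if m < i then π.vert m else π.vert (i + (m - i) % d)) = π.vert m
  by_cases h : m < i
  · rw [if_pos h]
  · have hmi : m = i := by omega
    rw [if_neg h, hmi, Nat.sub_self, Nat.zero_mod, Nat.add_zero]

theorem Path.loop_vert_ge {G : MPGame V} (π : G.Path) {i d : ℕ} (hd : 0 < d)
    (heq : π.vert (i + d) = π.vert i) {m : ℕ} (hm : i ≤ m) :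
    (π.loopAt i d hd heq).vert m = π.vert (i + (m - i) % d) := by
  show (if m < i then π.vert m else π.vert (i + (m - i) % d)) = _
  by_cases h : m < i
  · omega
  · rw [if_neg h]

theorem Path.loop_vert_succ {G : MPGame V} (π : G.Path) {i d : ℕ} (hd : 0 < d)
    (heq : π.vert (i + d) = π.vert i) {m : ℕ} (hm : i ≤ m) :
    (π.loopAt i d hd heq).vert (m + 1) = π.vert (i + (m - i) % d + 1) := by
  rw [Path.loop_vert_ge π hd heq (by omega : i ≤ m + 1)]
  have hsub : m + 1 - i = (m - i) + 1 := by omega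
  have hr : (m - i) % d < d := Nat.mod_lt _ hd
  have hmod : ((m - i) + 1) % d = ((m - i) % d + 1) % d := by
    conv_lhs => rw [Nat.add_mod]
    conv_rhs => rw [Nat.add_mod, Nat.mod_mod_of_dvd _ dvd_rfl]
  rw [hsub, hmod, Path.loop_target π hd heq hr]

theorem Path.loop_consMin {G : MPGame V} (π : G.Path) {i d : ℕ} (hd : 0 < d)
    (heq : π.vert (i + d) = π.vert i) {σ : V → V} (hc : π.ConsMin σ) :
    (π.loopAt i d hd heq).ConsMin σ := by
  intro m hm
  by_cases h2 : m < i
  · rw [Path.loop_vert_le π hd heq (le_of_lt h2)] at hm ⊢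
    rw [Path.loop_vert_le π hd heq (by omega : m + 1 ≤ i)]
    exact hc m hm
  · rw [Path.loop_vert_ge π hd heq (not_lt.1 h2)] at hm ⊢
    rw [Path.loop_vert_succ π hd heq (not_lt.1 h2)]
    exact hc _ hm

theorem Path.loop_vert_le_d {G : MPGame V} (π : G.Path) {i d : ℕ} (hd : 0 < d)
    (heq : π.vert (i + d) = π.vert i) {m : ℕ} (hm : m ≤ i + d) :
    (π.loopAt i d hd heq).vert m = π.vert m := by
  by_cases h2 : m ≤ i
  · exact Path.loop_vert_le π hd heq h2
  · rw [Path.loop_vert_ge π hd heq (by omega : i ≤ m)]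
    by_cases h3 : m < i + d
    · rw [Nat.mod_eq_of_lt (by omega : m - i < d)]
      congr 1
      omega
    · have hmi : m - i = d := by omega
      rw [hmi, Nat.mod_self, Nat.add_zero, ← heq]
      congr 1
      omega

theorem Path.loop_wsum_le_d {G : MPGame V} (π : G.Path) {i d : ℕ} (hd : 0 < d)
    (heq : π.vert (i + d) = π.vert i) {k : ℕ} (hk : k ≤ i + d) :
    (π.loopAt i d hd heq).wsum k = π.wsum k :=
  Path.wsum_congr fun m hm => Path.loop_vert_le_d π hd heq (by omega)

theorem Path.loop_w_succ {G : MPGame V} (π : G.Path) {i d : ℕ} (hd : 0 < d)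
    (heq : π.vert (i + d) = π.vert i) {m : ℕ} (hm : i ≤ m) :
    G.w ((π.loopAt i d hd heq).vert m) ((π.loopAt i d hd heq).vert (m + 1)) =
      G.w (π.vert (i + (m - i) % d)) (π.vert (i + (m - i) % d + 1)) := by
  rw [Path.loop_vert_ge π hd heq hm, Path.loop_vert_succ π hd heq hm]

theorem Path.loop_wsum_add_d {G : MPGame V} (π : G.Path) {i d : ℕ} (hd : 0 < d)
    (heq : π.vert (i + d) = π.vert i) : ∀ t : ℕ,
    (π.loopAt i d hd heq).wsum (i + t + d) =
      (π.loopAt i d hd heq).wsum (i + t) + (π.wsum (i + d) - π.wsum i) := by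
  intro t
  induction t with
  | zero =>
    rw [Nat.add_zero, Path.loop_wsum_le_d π hd heq (le_refl (i + d)),
      Path.loop_wsum_le_d π hd heq (by omega : i ≤ i + d)]
    ring
  | succ t ih =>
    rw [show i + (t + 1) + d = (i + t + d) + 1 from by omega, Path.wsum_succ', ih,
      show i + (t + 1) = (i + t) + 1 from by omega, Path.wsum_succ',
      Path.loop_w_succ π hd heq (by omega : i ≤ i + t + d),
      Path.loop_w_succ π hd heq (by omega : i ≤ i + t),
      show i + t + d - i = (i + t - i) + d from by omega, Nat.add_mod_right]
    ring

theorem Path.loop_wsum_period {G : MPGame V} (π : G.Path) {i d : ℕ} (hd : 0 < d)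
    (heq : π.vert (i + d) = π.vert i) : ∀ q t : ℕ,
    (π.loopAt i d hd heq).wsum (i + (q * d + t)) =
      (π.loopAt i d hd heq).wsum (i + t) + (q : ℤ) * (π.wsum (i + d) - π.wsum i) := by
  intro q t
  induction q with
  | zero => simp
  | succ q ih =>
    rw [show i + ((q + 1) * d + t) = i + (q * d + t) + d from by ring, Path.loop_wsum_add_d,
      ih]
    push_cast
    ring

/-! ### Pigeonhole, default paths -/

theorem Path.exists_repeat [Fintype V] {G : MPGame V} (π : G.Path) (s : ℕ) :
    ∃ a b : ℕ, s ≤ a ∧ a < b ∧ b ≤ s + Fintype.card V ∧ π.vert a = π.vert b := by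
  have hcard : Fintype.card V < Fintype.card (Fin (Fintype.card V + 1)) := by simp
  obtain ⟨x, y, hxy, hmap⟩ := Fintype.exists_ne_map_eq_of_card_lt
    (fun t : Fin (Fintype.card V + 1) => π.vert (s + t)) hcard
  have hxy' : (x : ℕ) ≠ (y : ℕ) := fun h => hxy (Fin.ext h)
  rcases hxy'.lt_or_gt with h | h
  · exact ⟨s + x, s + y, by omega, by omega, by have := y.isLt; omega, hmap⟩
  · exact ⟨s + y, s + x, by omega, by omega, by have := x.isLt; omega, hmap.symm⟩

open scoped Classical in
noncomputable def defaultPath (G : MPGame V) (σ : V → V) (hσ : G.Legal σ) (v : V) :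
    G.Path where
  vert i := (fun u => if G.IsMin u then σ u else Classical.choose (G.sinkless u))^[i] v
  adj i := by
    rw [Function.iterate_succ_apply']
    by_cases h : G.IsMin ((fun u => if G.IsMin u then σ u else Classical.choose (G.sinkless u))^[i] v)
    · rw [if_pos h]; exact hσ _
    · rw [if_neg h]; exact Classical.choose_spec (G.sinkless _)

theorem defaultPath_vert_zero (G : MPGame V) (σ : V → V) (hσ : G.Legal σ) (v : V) :
    (G.defaultPath σ hσ v).vert 0 = v := rfl

open scoped Classical in
theorem defaultPath_consMin (G : MPGame V) (σ : V → V) (hσ : G.Legal σ) (v : V) :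
    (G.defaultPath σ hσ v).ConsMin σ := by
  intro i hi
  show (fun u => if G.IsMin u then σ u else Classical.choose (G.sinkless u))^[i+1] v = _
  rw [Function.iterate_succ_apply']
  exact if_pos hi

/-! ### Key quantitative bounds -/

theorem key_neg [Fintype V] {G : MPGame V} {σ : V → V} {v : V} {W : ℤ} (hW0 : 0 ≤ W)
    (hWub : ∀ u u', G.E u u' → G.w u u' ≤ W)
    (hneg : ∀ π : G.Path, π.vert 0 = v → π.ConsMin σ →
      ∀ i j, i < j → π.vert i = π.vert j → π.wsum j ≤ π.wsum i - 1) :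
    ∀ (k : ℕ) (π : G.Path), π.vert 0 = v → π.ConsMin σ →
      (Fintype.card V : ℤ) * π.wsum k ≤
        (Fintype.card V : ℤ) * (Fintype.card V : ℤ) * W + (Fintype.card V : ℤ) - (k : ℤ) := by
  intro k
  induction k using Nat.strong_induction_on with
  | _ k ih =>
    intro π h0 hc
    have hNe : Nonempty V := ⟨v⟩
    set N := Fintype.card V with hN
    have hn1 : 1 ≤ N := Fintype.card_pos
    by_cases hk : k ≤ N
    · have hb := π.wsum_le_bound hWub k
      have e1 : (N : ℤ) * π.wsum k ≤ (N : ℤ) * ((k : ℤ) * W) :=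
        mul_le_mul_of_nonneg_left hb (by positivity)
      have e2 : (N : ℤ) * ((k : ℤ) * W) ≤ (N : ℤ) * ((N : ℤ) * W) := by
        have : (k : ℤ) * W ≤ (N : ℤ) * W :=
          mul_le_mul_of_nonneg_right (by exact_mod_cast hk) hW0
        exact mul_le_mul_of_nonneg_left this (by positivity)
      have hkN : (k : ℤ) ≤ (N : ℤ) := by exact_mod_cast hk
      nlinarith
    · obtain ⟨a, b, -, hab, hbN, heq⟩ := π.exists_repeat 0
      rw [Nat.zero_add] at hbN
      set π' := π.skip a b hab.le heq with hπ'
      set k' := k - (b - a) with hk'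
      have hk'lt : k' < k := by omega
      have hak' : a ≤ k' := by omega
      have hIH := ih k' hk'lt π'
        (by rw [hπ', Path.skip_vert_le π hab.le heq (Nat.zero_le a)]; exact h0)
        (Path.skip_consMin π hab.le heq hc)
      have hws : π'.wsum k' = π.wsum (k' + (b - a)) + π.wsum a - π.wsum b :=
        Path.skip_wsum_ge π hab.le heq k' hak'
      have hkk : k' + (b - a) = k := by omega
      rw [hkk] at hws
      have hcyc : π.wsum b ≤ π.wsum a - 1 := hneg π h0 hc a b hab heq
      have hge : π.wsum k + 1 ≤ π'.wsum k' := by omega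
      have e3 : (N : ℤ) * (π.wsum k + 1) ≤ (N : ℤ) * π'.wsum k' :=
        mul_le_mul_of_nonneg_left hge (by positivity)
      have hk'c : (k' : ℤ) = (k : ℤ) - ((b : ℤ) - (a : ℤ)) := by omega
      have hbaN : (b : ℤ) - (a : ℤ) ≤ (N : ℤ) := by
        have : b ≤ N := hbN
        omega
      nlinarith

theorem key_pos {G : MPGame V} {σ : V → V} {v : V} {W : ℤ} (hW0 : 0 ≤ W)
    (hWlb : ∀ u u', G.E u u' → -W ≤ G.w u u')
    (hgood : ∃ π : G.Path, π.vert 0 = v ∧ π.ConsMin σ ∧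
      ∃ i j, i < j ∧ π.vert i = π.vert j ∧ π.wsum i + 1 ≤ π.wsum j) :
    ∃ (π' : G.Path) (d A : ℤ), π'.vert 0 = v ∧ π'.ConsMin σ ∧ 1 ≤ d ∧ 0 ≤ A ∧
      ∀ k : ℕ, (k : ℤ) - A ≤ d * π'.wsum k := by
  obtain ⟨π, h0, hc, i, j, hij, he, hwij⟩ := hgood
  set d := j - i with hdd
  have hd : 0 < d := by omega
  have heq : π.vert (i + d) = π.vert i := by
    rw [show i + d = j from by omega]; exact he.symm
  set π' := π.loopAt i d hd heq with hπ'
  have hidj : i + d = j := by omega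
  have hcyc : 1 ≤ π.wsum (i + d) - π.wsum i := by rw [hidj]; omega
  refine ⟨π', (d : ℤ), (d : ℤ) * (((i : ℤ) + (d : ℤ)) * W) + (i : ℤ) + (d : ℤ),
    ?_, Path.loop_consMin π hd heq hc, by exact_mod_cast hd, ?_, ?_⟩
  · rw [hπ', Path.loop_vert_le π hd heq (Nat.zero_le i)]; exact h0
  · positivity
  · intro k
    set c := π.wsum (i + d) - π.wsum i with hcc
    by_cases hik : i ≤ k
    · obtain ⟨q, t, u, htd, hu, hqd⟩ : ∃ q t u : ℕ, t < d ∧ u = q * d ∧ u + t = k - i :=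
        ⟨(k - i) / d, (k - i) % d, (k - i) / d * d, Nat.mod_lt _ hd, rfl,
          by rw [Nat.mul_comm]; exact Nat.div_add_mod _ _⟩
      have hk2 : k = i + (q * d + t) := by rw [← hu]; omega
      have hper : π'.wsum k = π'.wsum (i + t) + (q : ℤ) * c := by
        rw [hk2]; exact Path.loop_wsum_period π hd heq q t
      have hwt : π'.wsum (i + t) = π.wsum (i + t) :=
        Path.loop_wsum_le_d π hd heq (by omega)
      have hlb : -(((i : ℤ) + (t : ℤ)) * W) ≤ π.wsum (i + t) := by
        have := π.le_wsum_bound hWlb (i + t)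
        push_cast at this ⊢
        linarith
      have hdq : (d : ℤ) * (q : ℤ) = (k : ℤ) - (i : ℤ) - (t : ℤ) := by
        have h1 : (u : ℤ) = (k : ℤ) - (i : ℤ) - (t : ℤ) := by omega
        rw [← h1, hu]
        push_cast
        ring
      rw [hper, hwt]
      have e1 : (d : ℤ) * -(((i : ℤ) + (t : ℤ)) * W) ≤ (d : ℤ) * π.wsum (i + t) :=
        mul_le_mul_of_nonneg_left hlb (by positivity)
      have e2 : (d : ℤ) * (q : ℤ) ≤ (d : ℤ) * (q : ℤ) * c := by
        have hdq0 : (0:ℤ) ≤ (d : ℤ) * (q : ℤ) := by positivity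
        nlinarith [mul_le_mul_of_nonneg_left hcyc hdq0]
      have e4 : (t : ℤ) ≤ (d : ℤ) := by exact_mod_cast htd.le
      have e5 : 0 ≤ (d : ℤ) * W * ((d : ℤ) - (t : ℤ)) := by
        have h1 : (0:ℤ) ≤ (d:ℤ) := by positivity
        exact mul_nonneg (mul_nonneg h1 hW0) (by linarith)
      nlinarith
    · have hkle : π'.wsum k = π.wsum k := Path.loop_wsum_le_d π hd heq (by omega)
      have hlb : -(((k : ℤ)) * W) ≤ π.wsum k := π.le_wsum_bound hWlb k
      rw [hkle]
      have e1 : (d : ℤ) * -((k : ℤ) * W) ≤ (d : ℤ) * π.wsum k :=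
        mul_le_mul_of_nonneg_left hlb (by positivity)
      have e5 : 0 ≤ (d : ℤ) * W * ((i : ℤ) + (d : ℤ) - (k : ℤ)) := by
        have h1 : (0:ℤ) ≤ (d:ℤ) := by positivity
        have h2 : (k : ℤ) ≤ (i : ℤ) := by exact_mod_cast (by omega : k ≤ i)
        have h3 : (0:ℤ) ≤ (d:ℤ) := h1
        exact mul_nonneg (mul_nonneg h1 hW0) (by linarith)
      have h2 : (k : ℤ) < (i : ℤ) := by exact_mod_cast (by omega : k < i)
      nlinarith

/-! ### EReal helpers -/

theorem exists_int_lt_of_bot_lt {b : EReal} (hb : ⊥ < b) :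
    ∃ m : ℤ, ((m : ℝ) : EReal) < b := by
  induction b with
  | bot => exact absurd hb (lt_irrefl _)
  | coe r =>
    obtain ⟨m, hm⟩ := exists_int_lt r
    exact ⟨m, by exact_mod_cast hm⟩
  | top => exact ⟨0, by exact_mod_cast EReal.coe_lt_top (0 : ℝ)⟩

theorem exists_int_gt_of_lt_top {b : EReal} (hb : b < ⊤) :
    ∃ m : ℤ, b < ((m : ℝ) : EReal) := by
  induction b with
  | bot => exact ⟨0, EReal.bot_lt_coe _⟩
  | coe r =>
    obtain ⟨m, hm⟩ := exists_int_gt r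
    exact ⟨m, by exact_mod_cast hm⟩
  | top => exact absurd hb (lt_irrefl _)

theorem iSup_int_of_bdd_nat (g : ℕ → ℤ) (b : ℤ) (hb : ∀ k, g k ≤ b) :
    ∃ m : ℤ, (⨆ k, ((g k : ℝ) : EReal)) = ((m : ℝ) : EReal) ∧ ∃ k, g k = m := by
  obtain ⟨m, ⟨k0, hk0⟩, hub⟩ := Int.exists_greatest_of_bdd
    (P := fun z => ∃ k, g k = z) ⟨b, fun z ⟨k, hk⟩ => hk ▸ hb k⟩ ⟨g 0, 0, rfl⟩
  refine ⟨m, le_antisymm (iSup_le fun k => ?_) ?_, k0, hk0⟩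
  · have : g k ≤ m := hub _ ⟨k, rfl⟩
    exact EReal.coe_le_coe_iff.2 (by exact_mod_cast this)
  · rw [show ((m : ℝ) : EReal) = ((g k0 : ℝ) : EReal) from by rw [hk0]]
    exact le_iSup (fun k => ((g k : ℝ) : EReal)) k0

theorem iInf_int_or_bot (g : ℕ → ℤ) :
    (⨅ k, ((g k : ℝ) : EReal)) = ⊥ ∨
      ∃ m : ℤ, (⨅ k, ((g k : ℝ) : EReal)) = ((m : ℝ) : EReal) ∧ ∃ k, g k = m := by
  by_cases hbd : ∃ B : ℤ, ∀ k, B ≤ g k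
  · right
    obtain ⟨B, hB⟩ := hbd
    obtain ⟨m, ⟨k0, hk0⟩, hlb⟩ := Int.exists_least_of_bdd
      (P := fun z => ∃ k, g k = z) ⟨B, fun z ⟨k, hk⟩ => hk ▸ hB k⟩ ⟨g 0, 0, rfl⟩
    refine ⟨m, le_antisymm ?_ (le_iInf fun k => ?_), k0, hk0⟩
    · rw [show ((m : ℝ) : EReal) = ((g k0 : ℝ) : EReal) from by rw [hk0]]
      exact iInf_le (fun k => ((g k : ℝ) : EReal)) k0
    · have : m ≤ g k := hlb _ ⟨k, rfl⟩
      exact EReal.coe_le_coe_iff.2 (by exact_mod_cast this)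
  · left
    rw [iInf_eq_bot]
    intro b hb
    push_neg at hbd
    obtain ⟨m, hm⟩ := exists_int_lt_of_bot_lt hb
    obtain ⟨k, hk⟩ := hbd m
    refine ⟨k, lt_trans ?_ hm⟩
    exact EReal.coe_lt_coe_iff.2 (by exact_mod_cast hk)

theorem iSup_int_of_bdd {ι : Type*} (f : ι → EReal) (b : ℤ)
    (hint : ∀ i, f i = ⊥ ∨ ∃ m : ℤ, f i = ((m : ℝ) : EReal))
    (hub : ∀ i, f i ≤ ((b : ℝ) : EReal))
    (hne : ∃ i, ∃ m0 : ℤ, f i = ((m0 : ℝ) : EReal)) :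
    ∃ m : ℤ, (⨆ i, f i) = ((m : ℝ) : EReal) ∧ ∃ i, f i = ((m : ℝ) : EReal) := by
  obtain ⟨i0, m0, hm0⟩ := hne
  obtain ⟨m, ⟨i1, hi1⟩, hmax⟩ := Int.exists_greatest_of_bdd
    (P := fun z => ∃ i, f i = ((z : ℝ) : EReal))
    ⟨b, fun z ⟨i, hi⟩ => by
      have := hub i
      rw [hi] at this
      exact_mod_cast this⟩ ⟨m0, i0, hm0⟩
  refine ⟨m, le_antisymm (iSup_le fun i => ?_) ?_, i1, hi1⟩
  · rcases hint i with h | ⟨m', hm'⟩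
    · rw [h]; exact bot_le
    · rw [hm']
      have : m' ≤ m := hmax _ ⟨i, hm'⟩
      exact EReal.coe_le_coe_iff.2 (by exact_mod_cast this)
  · rw [← hi1]
    exact le_iSup f i1

/-! ### Valuations with `X = ∅` -/

theorem supSigma_empty {G : MPGame V} (π : G.Path) :
    supSigma ∅ π = ⨆ k : ℕ, ((π.wsum k : ℝ) : EReal) := by
  unfold supSigma
  apply le_antisymm
  · exact iSup_le fun k => le_iSup (fun k : ℕ => ((π.wsum k : ℝ) : EReal)) k.1
  · exact iSup_le fun k =>
      le_iSup_of_le ⟨k, fun i _ => Set.notMem_empty _⟩ le_rfl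

theorem infSigma_empty {G : MPGame V} (π : G.Path) :
    infSigma ∅ π = ⨅ k : ℕ, ((π.wsum k : ℝ) : EReal) := by
  unfold infSigma
  apply le_antisymm
  · exact le_iInf fun k => iInf_le_of_le ⟨k, fun i _ => Set.notMem_empty _⟩ le_rfl
  · exact le_iInf fun k => iInf_le (fun k : ℕ => ((π.wsum k : ℝ) : EReal)) k.1

/-! ### Consequences of the quantitative bounds -/

/-- From `d·wsum k ≤ C - k`: the partial sums are bounded above by `C`. -/
theorem wsum_le_of_lin {G : MPGame V} {π : G.Path} {d C : ℤ} (hd : 1 ≤ d) (hC : 0 ≤ C)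
    (h : ∀ k : ℕ, d * π.wsum k ≤ C - (k : ℤ)) : ∀ k, π.wsum k ≤ C := by
  intro k
  have h1 : d * π.wsum k ≤ d * C := by
    have := h k
    nlinarith [Int.natCast_nonneg k]
  exact le_of_mul_le_mul_left h1 (by omega)

/-- From `k - A ≤ d·wsum k`: the partial sums are bounded below by `-A`. -/
theorem le_wsum_of_lin {G : MPGame V} {π : G.Path} {d A : ℤ} (hd : 1 ≤ d) (hA : 0 ≤ A)
    (h : ∀ k : ℕ, (k : ℤ) - A ≤ d * π.wsum k) : ∀ k, -A ≤ π.wsum k := by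
  intro k
  have h1 : d * -A ≤ d * π.wsum k := by
    have := h k
    nlinarith [Int.natCast_nonneg k]
  exact le_of_mul_le_mul_left h1 (by omega)

theorem iInf_wsum_eq_bot {G : MPGame V} {π : G.Path} {d C : ℤ} (hd : 1 ≤ d)
    (h : ∀ k : ℕ, d * π.wsum k ≤ C - (k : ℤ)) :
    (⨅ k : ℕ, ((π.wsum k : ℝ) : EReal)) = ⊥ := by
  rw [iInf_eq_bot]
  intro b hb
  obtain ⟨m, hm⟩ := exists_int_lt_of_bot_lt hb
  set k : ℕ := (C - d * m).toNat + 1 with hk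
  have hkz : C - d * m < (k : ℤ) := by
    have := Int.self_le_toNat (C - d * m)
    push_cast [hk]
    omega
  refine ⟨k, lt_trans ?_ hm⟩
  have h1 : d * π.wsum k < d * m := by
    have := h k
    omega
  have h2 : π.wsum k < m := lt_of_mul_lt_mul_left h1 (by omega)
  exact EReal.coe_lt_coe_iff.2 (by exact_mod_cast h2)

theorem iSup_wsum_eq_top {G : MPGame V} {π : G.Path} {d A : ℤ} (hd : 1 ≤ d)
    (h : ∀ k : ℕ, (k : ℤ) - A ≤ d * π.wsum k) :
    (⨆ k : ℕ, ((π.wsum k : ℝ) : EReal)) = ⊤ := by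
  rw [iSup_eq_top]
  intro b hb
  obtain ⟨m, hm⟩ := exists_int_gt_of_lt_top hb
  set k : ℕ := (A + d * m).toNat + 1 with hk
  have hkz : A + d * m < (k : ℤ) := by
    have := Int.self_le_toNat (A + d * m)
    push_cast [hk]
    omega
  refine ⟨k, lt_trans hm ?_⟩
  have h1 : d * m < d * π.wsum k := by
    have := h k
    omega
  have h2 : m < π.wsum k := lt_of_mul_lt_mul_left h1 (by omega)
  exact EReal.coe_lt_coe_iff.2 (by exact_mod_cast h2)

/-! ### Mean-payoff bounds -/

theorem MP_le_neg {G : MPGame V} {π : G.Path} {d C : ℤ} (hd : 1 ≤ d) (hC : 0 ≤ C)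
    (h : ∀ k : ℕ, d * π.wsum k ≤ C - (k : ℤ)) :
    MP π ≤ (((-(1 / (2 * (d : ℝ)))) : ℝ) : EReal) := by
  apply Filter.limsup_le_of_le (by isBoundedDefault)
  filter_upwards [Filter.eventually_ge_atTop ((2 * C).toNat + 1)] with k hk
  have hk1 : 1 ≤ k := by omega
  have hkC : 2 * C < (k : ℤ) := by
    have h1 := Int.self_le_toNat (2 * C)
    have h2 : (2 * C).toNat < k := by omega
    have h3 : ((2 * C).toNat : ℤ) < (k : ℤ) := by exact_mod_cast h2
    omega
  rw [← EReal.coe_div, EReal.coe_le_coe_iff]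
  have hw : (d : ℝ) * (π.wsum k : ℝ) ≤ (C : ℝ) - (k : ℝ) := by exact_mod_cast h k
  have hkR : (1 : ℝ) ≤ (k : ℝ) := by exact_mod_cast hk1
  have hCk : 2 * (C : ℝ) < (k : ℝ) := by exact_mod_cast hkC
  have hdR : (1 : ℝ) ≤ (d : ℝ) := by exact_mod_cast hd
  have hk0 : (0 : ℝ) < (k : ℝ) := by linarith
  have hd0 : (0 : ℝ) < (d : ℝ) := by linarith
  rw [div_le_iff₀ hk0]
  have key : 2 * (d : ℝ) * (π.wsum k : ℝ) + (k : ℝ) < 0 := by nlinarith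
  have htarget : (2 * (d : ℝ)) * (-(1 / (2 * (d : ℝ))) * (k : ℝ)) = -(k : ℝ) := by
    field_simp
  have h5 : (2 * (d : ℝ)) * (π.wsum k : ℝ) < (2 * (d : ℝ)) * (-(1 / (2 * (d : ℝ))) * (k : ℝ)) := by
    rw [htarget]; linarith
  exact le_of_lt (lt_of_mul_lt_mul_left h5 (by positivity))

theorem MP_ge_pos {G : MPGame V} {π : G.Path} {d A : ℤ} (hd : 1 ≤ d) (hA : 0 ≤ A)
    (h : ∀ k : ℕ, (k : ℤ) - A ≤ d * π.wsum k) :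
    (((1 / (2 * (d : ℝ))) : ℝ) : EReal) ≤ MP π := by
  apply Filter.le_limsup_of_frequently_le _ (by isBoundedDefault)
  apply Filter.Eventually.frequently
  filter_upwards [Filter.eventually_ge_atTop ((2 * A).toNat + 1)] with k hk
  have hk1 : 1 ≤ k := by omega
  have hkA : 2 * A < (k : ℤ) := by
    have h1 := Int.self_le_toNat (2 * A)
    have h3 : ((2 * A).toNat : ℤ) < (k : ℤ) := by exact_mod_cast (by omega : (2 * A).toNat < k)
    omega
  rw [← EReal.coe_div, EReal.coe_le_coe_iff]
  have hw : (k : ℝ) - (A : ℝ) ≤ (d : ℝ) * (π.wsum k : ℝ) := by exact_mod_cast h k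
  have hkR : (1 : ℝ) ≤ (k : ℝ) := by exact_mod_cast hk1
  have hAk : 2 * (A : ℝ) < (k : ℝ) := by exact_mod_cast hkA
  have hdR : (1 : ℝ) ≤ (d : ℝ) := by exact_mod_cast hd
  have hk0 : (0 : ℝ) < (k : ℝ) := by linarith
  rw [le_div_iff₀ hk0]
  have key : (k : ℝ) ≤ 2 * (d : ℝ) * (π.wsum k : ℝ) := by nlinarith
  have htarget : (2 * (d : ℝ)) * (1 / (2 * (d : ℝ)) * (k : ℝ)) = (k : ℝ) := by
    field_simp
  have h5 : (2 * (d : ℝ)) * (1 / (2 * (d : ℝ)) * (k : ℝ)) ≤ (2 * (d : ℝ)) * (π.wsum k : ℝ) := by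
    rw [htarget]; linarith
  exact le_of_mul_le_mul_left h5 (by positivity)


end MPGame


open MPGame in
/-- in a finite game with no zero cycle every vertex has
nonzero MP-value; vertices of MP-value `< 0` have finite (nonnegative
integer) `supΣ`-value and `infΣ`-value `−∞`, and vertices of MP-value `> 0`
have `supΣ`-value `+∞` and finite (nonpositive integer) `infΣ`-value. -/
theorem statement5 {V : Type*} [Fintype V] (G : MPGame V)
    (hz : G.NoZeroCycle) (v : V) :
    G.MPval v ≠ 0 ∧
    (G.MPval v < 0 →
      (∃ n : ℤ, 0 ≤ n ∧ G.supSigmaVal ∅ v = ((n : ℝ) : EReal)) ∧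
      G.infSigmaVal ∅ v = ⊥) ∧
    (0 < G.MPval v →
      G.supSigmaVal ∅ v = ⊤ ∧
      ∃ n : ℤ, n ≤ 0 ∧ G.infSigmaVal ∅ v = ((n : ℝ) : EReal)) := by
  classical
  have hNe : Nonempty V := ⟨v⟩
  obtain ⟨W0, hW0all⟩ := Finite.exists_le (fun p : V × V => |G.w p.1 p.2|)
  set W : ℤ := max W0 0 with hWdef
  have hW0 : 0 ≤ W := le_max_right _ _
  have habs : ∀ u u' : V, |G.w u u'| ≤ W := fun u u' =>
    le_trans (hW0all (u, u')) (le_max_left _ _)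
  have hWub : ∀ u u', G.E u u' → G.w u u' ≤ W := fun u u' _ => (abs_le.1 (habs u u')).2
  have hWlb : ∀ u u', G.E u u' → -W ≤ G.w u u' := fun u u' _ => (abs_le.1 (habs u u')).1
  set N : ℤ := (Fintype.card V : ℤ) with hNdef
  have hN1 : 1 ≤ N := by
    rw [hNdef]
    exact_mod_cast (Fintype.card_pos : 0 < Fintype.card V)
  set C : ℤ := N * N * W + N with hCdef
  have hC0 : 0 ≤ C := by nlinarith
  haveI hSne : Nonempty {σ : V → V // G.Legal σ} :=
    ⟨⟨fun u => Classical.choose (G.sinkless u), fun u => Classical.choose_spec (G.sinkless u)⟩⟩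
  haveI hSfin : Finite {σ : V → V // G.Legal σ} := Subtype.finite
  have hPne : ∀ σ : {σ : V → V // G.Legal σ},
      Nonempty {π : G.Path // π.vert 0 = v ∧ π.ConsMin σ.1} :=
    fun σ => ⟨⟨G.defaultPath σ.1 σ.2 v, G.defaultPath_vert_zero σ.1 σ.2 v,
      G.defaultPath_consMin σ.1 σ.2 v⟩⟩
  let Good : (V → V) → Prop := fun σ => ∃ π : G.Path, π.vert 0 = v ∧ π.ConsMin σ ∧
    ∃ i j, i < j ∧ π.vert i = π.vert j ∧ π.wsum i + 1 ≤ π.wsum j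
  have negKey : ∀ σ : V → V, ¬ Good σ → ∀ π : G.Path, π.vert 0 = v → π.ConsMin σ →
      ∀ k : ℕ, N * π.wsum k ≤ C - (k : ℤ) := by
    intro σ hg π h0 hc k
    have hneg : ∀ π' : G.Path, π'.vert 0 = v → π'.ConsMin σ →
        ∀ i j, i < j → π'.vert i = π'.vert j → π'.wsum j ≤ π'.wsum i - 1 := by
      intro π' h0' hc' i j hij he
      have h1 : ¬ (π'.wsum i + 1 ≤ π'.wsum j) := fun hcon =>
        hg ⟨π', h0', hc', i, j, hij, he, hcon⟩
      have h2 : π'.wsum i ≠ π'.wsum j := hz π' i j hij he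
      omega
    have hkey := key_neg hW0 hWub hneg k π h0 hc
    rw [hCdef, hNdef]
    exact hkey
  have posKey : ∀ σ : V → V, Good σ →
      ∃ (π' : G.Path) (d A : ℤ), π'.vert 0 = v ∧ π'.ConsMin σ ∧ 1 ≤ d ∧ 0 ≤ A ∧
        ∀ k : ℕ, (k : ℤ) - A ≤ d * π'.wsum k :=
    fun σ hg => key_pos hW0 hWlb hg
  let fMP : {σ : V → V // G.Legal σ} → EReal := fun σ =>
    ⨆ π : {π : G.Path // π.vert 0 = v ∧ π.ConsMin σ.1}, MP π.1
  have hMPval : G.MPval v = ⨅ σ : {σ : V → V // G.Legal σ}, fMP σ := rfl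
  let gS : {σ : V → V // G.Legal σ} → EReal := fun σ =>
    ⨆ π : {π : G.Path // π.vert 0 = v ∧ π.ConsMin σ.1}, supSigma ∅ π.1
  have hSval : G.supSigmaVal ∅ v = ⨅ σ : {σ : V → V // G.Legal σ}, gS σ := rfl
  let gI : {σ : V → V // G.Legal σ} → EReal := fun σ =>
    ⨆ π : {π : G.Path // π.vert 0 = v ∧ π.ConsMin σ.1}, infSigma ∅ π.1
  have hIval : G.infSigmaVal ∅ v = ⨅ σ : {σ : V → V // G.Legal σ}, gI σ := rfl
  have negMP : ∀ σ : {σ : V → V // G.Legal σ}, ¬ Good σ.1 →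
      fMP σ ≤ (((-(1 / (2 * (N : ℝ)))) : ℝ) : EReal) := by
    intro σ hg
    refine iSup_le fun π => ?_
    exact MP_le_neg hN1 hC0 (negKey σ.1 hg π.1 π.2.1 π.2.2)
  have hNR : (0 : ℝ) < (N : ℝ) := by exact_mod_cast (by omega : (0:ℤ) < N)
  have negneg : ((((-(1 / (2 * (N : ℝ))))) : ℝ) : EReal) < 0 := by
    rw [← EReal.coe_zero, EReal.coe_lt_coe_iff]
    have h2 : (0:ℝ) < 1 / (2 * (N : ℝ)) := by positivity
    linarith
  have posMP : ∀ σ : {σ : V → V // G.Legal σ}, Good σ.1 → 0 < fMP σ := by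
    intro σ hg
    obtain ⟨π', d, A, h0, hc, hd, hA, hlin⟩ := posKey σ.1 hg
    have h1 : (((1 / (2 * (d : ℝ))) : ℝ) : EReal) ≤ MP π' := MP_ge_pos hd hA hlin
    have h2 : MP π' ≤ fMP σ :=
      le_iSup (fun π : {π : G.Path // π.vert 0 = v ∧ π.ConsMin σ.1} => MP π.1) ⟨π', h0, hc⟩
    have h3 : (0:EReal) < (((1 / (2 * (d : ℝ))) : ℝ) : EReal) := by
      rw [← EReal.coe_zero, EReal.coe_lt_coe_iff]
      have hdR : (0:ℝ) < (d:ℝ) := by exact_mod_cast (by omega : (0:ℤ) < d)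
      positivity
    exact lt_of_lt_of_le h3 (le_trans h1 h2)
  obtain ⟨σstar, hσstar⟩ := Finite.exists_min fMP
  have hMPeq : G.MPval v = fMP σstar := by
    rw [hMPval]
    exact le_antisymm (iInf_le fMP σstar) (le_iInf hσstar)
  refine ⟨?_, ?_, ?_⟩
  · by_cases hg : Good σstar.1
    · exact ne_of_gt (hMPeq ▸ posMP σstar hg)
    · exact ne_of_lt (hMPeq ▸ lt_of_le_of_lt (negMP σstar hg) negneg)
  · intro hlt
    have hg : ¬ Good σstar.1 := by
      intro hgg
      have := hMPeq ▸ posMP σstar hgg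
      exact absurd hlt (not_lt.2 (le_of_lt this))
    constructor
    · -- supΣ-value is a nonnegative integer
      obtain ⟨σ1, hσ1⟩ := Finite.exists_min gS
      haveI := hPne σ1
      have hSeq : G.supSigmaVal ∅ v = gS σ1 := by
        rw [hSval]
        exact le_antisymm (iInf_le gS σ1) (le_iInf hσ1)
      have hbound : gS σstar ≤ ((C : ℝ) : EReal) := by
        refine iSup_le fun π => ?_
        rw [supSigma_empty]
        refine iSup_le fun k => ?_
        have h1 : π.1.wsum k ≤ C :=
          wsum_le_of_lin hN1 hC0 (negKey σstar.1 hg π.1 π.2.1 π.2.2) k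
        exact EReal.coe_le_coe_iff.2 (by exact_mod_cast h1)
      have hb1 : gS σ1 ≤ ((C : ℝ) : EReal) := le_trans (hσ1 σstar) hbound
      have hb1' : (⨆ π : {π : G.Path // π.vert 0 = v ∧ π.ConsMin σ1.1},
          supSigma ∅ π.1) ≤ ((C : ℝ) : EReal) := hb1
      have hint : ∀ π : {π : G.Path // π.vert 0 = v ∧ π.ConsMin σ1.1},
          ∃ m : ℤ, supSigma ∅ π.1 = ((m : ℝ) : EReal) ∧ 0 ≤ m := by
        intro π
        have hub : ∀ k : ℕ, π.1.wsum k ≤ C := by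
          intro k
          have h2 : ((π.1.wsum k : ℝ) : EReal) ≤ ((C : ℝ) : EReal) := by
            refine le_trans ?_ hb1
            refine le_trans ?_
              (le_iSup (fun π : {π : G.Path // π.vert 0 = v ∧ π.ConsMin σ1.1} =>
                supSigma ∅ π.1) π)
            rw [supSigma_empty]
            exact le_iSup (fun k : ℕ => ((π.1.wsum k : ℝ) : EReal)) k
          have h3 : ((π.1.wsum k : ℝ)) ≤ ((C : ℝ)) := EReal.coe_le_coe_iff.1 h2
          exact_mod_cast h3
        obtain ⟨m, hm, k1, hk1⟩ := iSup_int_of_bdd_nat (fun k => π.1.wsum k) C hub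
        refine ⟨m, by rw [supSigma_empty]; exact hm, ?_⟩
        have h3 : ((π.1.wsum 0 : ℝ) : EReal) ≤ ((m : ℝ) : EReal) :=
          hm ▸ le_iSup (fun k : ℕ => ((π.1.wsum k : ℝ) : EReal)) 0
        rw [π.1.wsum_zero'] at h3
        have h4 : ((0:ℤ):ℝ) ≤ ((m:ℤ):ℝ) := by
          have := EReal.coe_le_coe_iff.1 h3
          exact_mod_cast this
        exact_mod_cast h4
      obtain ⟨m, hmeq, πw, hπw⟩ := iSup_int_of_bdd
        (fun π : {π : G.Path // π.vert 0 = v ∧ π.ConsMin σ1.1} => supSigma ∅ π.1) C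
        (fun π => Or.inr ⟨(hint π).choose, (hint π).choose_spec.1⟩)
        (fun π => le_trans (le_iSup (fun π : {π : G.Path // π.vert 0 = v ∧
          π.ConsMin σ1.1} => supSigma ∅ π.1) π) hb1')
        ⟨Classical.arbitrary _, (hint _).choose, (hint _).choose_spec.1⟩
      refine ⟨m, ?_, by rw [hSeq]; exact hmeq⟩
      obtain ⟨m', hm', hm'0⟩ := hint πw
      have he1 : ((m:ℝ):EReal) = ((m':ℝ):EReal) := by rw [← hπw, hm']
      have he2 : m = m' := by exact_mod_cast he1
      omega
    · -- infΣ-value is ⊥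
      have hIb : G.infSigmaVal ∅ v ≤ gI σstar := by
        rw [hIval]
        exact iInf_le gI σstar
      have hsup : gI σstar = ⊥ := by
        rw [iSup_eq_bot]
        intro π
        rw [infSigma_empty]
        exact iInf_wsum_eq_bot hN1 (negKey σstar.1 hg π.1 π.2.1 π.2.2)
      exact le_bot_iff.1 (hsup ▸ hIb)
  · intro hgt
    have hallgood : ∀ σ : {σ : V → V // G.Legal σ}, Good σ.1 := by
      intro σ
      by_contra hgg
      have h1 : fMP σ ≤ (((-(1 / (2 * (N : ℝ)))) : ℝ) : EReal) := negMP σ hgg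
      have h2 : G.MPval v ≤ fMP σ := by rw [hMPval]; exact iInf_le fMP σ
      have h3 := lt_of_le_of_lt (le_trans h2 h1) negneg
      exact absurd hgt (not_lt.2 (le_of_lt h3))
    constructor
    · -- supΣ-value = ⊤
      have htop : ∀ σ : {σ : V → V // G.Legal σ}, gS σ = ⊤ := by
        intro σ
        obtain ⟨π', d, A, h0, hc, hd, hA, hlin⟩ := posKey σ.1 (hallgood σ)
        have h1 : supSigma ∅ π' = ⊤ := by
          rw [supSigma_empty]
          exact iSup_wsum_eq_top hd hlin
        exact top_unique (h1 ▸
          le_iSup (fun π : {π : G.Path // π.vert 0 = v ∧ π.ConsMin σ.1} =>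
            supSigma ∅ π.1) ⟨π', h0, hc⟩)
      rw [hSval, iInf_eq_top]
      exact htop
    · -- infΣ-value is a nonpositive integer
      obtain ⟨σ2, hσ2⟩ := Finite.exists_min gI
      have hIeq : G.infSigmaVal ∅ v = gI σ2 := by
        rw [hIval]
        exact le_antisymm (iInf_le gI σ2) (le_iInf hσ2)
      obtain ⟨π', d, A, h0, hc, hd, hA, hlin⟩ := posKey σ2.1 (hallgood σ2)
      have hlow : ∀ k : ℕ, -A ≤ π'.wsum k := le_wsum_of_lin hd hA hlin
      have hπ'low : (((-A : ℤ) : ℝ) : EReal) ≤ infSigma ∅ π' := by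
        rw [infSigma_empty]
        exact le_iInf fun k => EReal.coe_le_coe_iff.2 (by exact_mod_cast hlow k)
      have hint2 : ∀ π : {π : G.Path // π.vert 0 = v ∧ π.ConsMin σ2.1},
          infSigma ∅ π.1 = ⊥ ∨ ∃ m : ℤ, infSigma ∅ π.1 = ((m : ℝ) : EReal) := by
        intro π
        rw [infSigma_empty]
        rcases iInf_int_or_bot (fun k => π.1.wsum k) with h | ⟨m, hm, -⟩
        · exact Or.inl h
        · exact Or.inr ⟨m, hm⟩
      have hub2 : ∀ π : {π : G.Path // π.vert 0 = v ∧ π.ConsMin σ2.1},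
          infSigma ∅ π.1 ≤ (((0:ℤ):ℝ):EReal) := by
        intro π
        rw [infSigma_empty]
        refine le_trans (iInf_le (fun k : ℕ => ((π.1.wsum k : ℝ) : EReal)) 0) ?_
        rw [π.1.wsum_zero']
      have hne2 : ∃ π : {π : G.Path // π.vert 0 = v ∧ π.ConsMin σ2.1},
          ∃ m0 : ℤ, infSigma ∅ π.1 = ((m0 : ℝ) : EReal) := by
        refine ⟨⟨π', h0, hc⟩, ?_⟩
        rcases hint2 ⟨π', h0, hc⟩ with h | h
        · rw [h] at hπ'low
          exact absurd hπ'low (not_le.2 (EReal.bot_lt_coe _))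
        · exact h
      obtain ⟨m, hmeq, πw, hπw⟩ := iSup_int_of_bdd
        (fun π : {π : G.Path // π.vert 0 = v ∧ π.ConsMin σ2.1} => infSigma ∅ π.1) 0
        hint2 hub2 hne2
      refine ⟨m, ?_, by rw [hIeq]; exact hmeq⟩
      have h5 := hub2 πw
      rw [hπw] at h5
      have h6 : ((m:ℤ):ℝ) ≤ ((0:ℤ):ℝ) := EReal.coe_le_coe_iff.1 h5
      exact_mod_cast h6
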